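/- arXiv:2104.06085 — 4 statements merged into one kernel-verified Lean document; each statement's English description precedes it below -/
import Mathlib

section
/- Let 𝔄 be a hyperassignment over X and P₁, P₂ : X → Prop arbitrary predicates (in the paper, Tarski satisfaction of two fixed QPTL formulas). Then: (i) there exists W ∈ 𝔄 such that P₁(a) and P₂(a) hold for all a ∈ W, if and only if for every (𝔄₁,𝔄₂) ∈ par(𝔄) there exist i ∈ {1,2} and W ∈ 𝔄ᵢ such that Pᵢ(a) holds for all a ∈ W; (ii) for every W ∈ 𝔄 there exists a ∈ W with P₁(a) or P₂(a), if and only if there exists (𝔄₁,𝔄₂) ∈ par(𝔄) such that for every i ∈ {1,2} and every W ∈ 𝔄ᵢ there exists a ∈ W with Pᵢ(a). (Lemma 2, Boolean Connectives.) -/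
namespace GFG

variable {X V : Type*}

/-- A hyperassignment over `X`: a nonempty set of subsets of `X` not containing `∅`. -/
def IsHyp (𝔄 : Set (Set X)) : Prop := 𝔄 ≠ ∅ ∧ ∅ ∉ 𝔄

/-- A choice function for `𝔄` picks an element of each member of `𝔄`. -/
def IsChoice (𝔄 : Set (Set X)) (ϑ : Set X → X) : Prop := ∀ W ∈ 𝔄, ϑ W ∈ W

/-- The dual hyperassignment: images of choice functions. -/
def hdual (𝔄 : Set (Set X)) : Set (Set X) :=
  { Y | ∃ ϑ : Set X → X, IsChoice 𝔄 ϑ ∧ Y = ϑ '' 𝔄 }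

/-- The preorder `⊑` on hyperassignments. -/
def hle (𝔄₁ 𝔄₂ : Set (Set X)) : Prop := ∀ W₁ ∈ 𝔄₁, ∃ W₂ ∈ 𝔄₂, W₂ ⊆ W₁

/-- The equivalence `≡` on hyperassignments. -/
def heqv (𝔄₁ 𝔄₂ : Set (Set X)) : Prop := hle 𝔄₁ 𝔄₂ ∧ hle 𝔄₂ 𝔄₁

/-- `par 𝔄`: the set of partitions of `𝔄` into two disjoint parts. -/
def par (𝔄 : Set (Set X)) : Set (Set (Set X) × Set (Set X)) :=
  { pr | pr.1 ∪ pr.2 = 𝔄 ∧ Disjoint pr.1 pr.2 }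

/-- Extension of a set of assignments by a functor. -/
def extSet (W : Set X) (F : X → V) : Set (X × V) := (fun a => (a, F a)) '' W

/-- Extension of a hyperassignment by a set of functors. -/
def extFam (𝓕 : Set (X → V)) (𝔄 : Set (Set X)) : Set (Set (X × V)) :=
  { Y | ∃ W ∈ 𝔄, ∃ F ∈ 𝓕, Y = extSet W F }

/-- Lemma 2 (Boolean Connectives). -/
theorem boolean_connectives (𝔄 : Set (Set X)) (h : IsHyp 𝔄) (P₁ P₂ : X → Prop) :
    ((∃ W ∈ 𝔄, ∀ a ∈ W, P₁ a ∧ P₂ a) ↔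
      ∀ pr ∈ par 𝔄, (∃ W ∈ pr.1, ∀ a ∈ W, P₁ a) ∨ (∃ W ∈ pr.2, ∀ a ∈ W, P₂ a)) ∧
    ((∀ W ∈ 𝔄, ∃ a ∈ W, P₁ a ∨ P₂ a) ↔
      ∃ pr ∈ par 𝔄, (∀ W ∈ pr.1, ∃ a ∈ W, P₁ a) ∧ (∀ W ∈ pr.2, ∃ a ∈ W, P₂ a)) := by
  constructor
  · constructor
    · rintro ⟨W, hW, hall⟩ pr ⟨hunion, _⟩
      have : W ∈ pr.1 ∪ pr.2 := hunion ▸ hW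
      rcases this with h1 | h2
      · exact Or.inl ⟨W, h1, fun a ha => (hall a ha).1⟩
      · exact Or.inr ⟨W, h2, fun a ha => (hall a ha).2⟩
    · intro hpar
      by_contra hcon
      push_neg at hcon
      have := hpar ({W ∈ 𝔄 | ¬ ∀ a ∈ W, P₁ a}, {W ∈ 𝔄 | ∀ a ∈ W, P₁ a})
        ⟨by ext W; simp only [Set.mem_union, Set.mem_setOf_eq]; tauto,
         Set.disjoint_left.mpr (fun W hW hW' => hW.2 hW'.2)⟩
      rcases this with ⟨W, hW, hall⟩ | ⟨W, hW, hall⟩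
      · exact hW.2 hall
      · rcases hcon W hW.1 with ⟨a, ha, hna⟩
        exact hna (hW.2 a ha) (hall a ha)
  · constructor
    · intro hall
      refine ⟨({W ∈ 𝔄 | ∃ a ∈ W, P₁ a}, {W ∈ 𝔄 | ¬ ∃ a ∈ W, P₁ a}),
        ⟨by
          ext W
          constructor
          · rintro (⟨hW, _⟩ | ⟨hW, _⟩) <;> exact hW
          · intro hW
            by_cases hp : ∃ a ∈ W, P₁ a
            · exact Or.inl ⟨hW, hp⟩
            · exact Or.inr ⟨hW, hp⟩,
         Set.disjoint_left.mpr (fun W hW hW' => hW'.2 hW.2)⟩,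
        fun W hW => hW.2, fun W hW => ?_⟩
      rcases hall W hW.1 with ⟨a, ha, h1 | h2⟩
      · exact absurd ⟨a, ha, h1⟩ hW.2
      · exact ⟨a, ha, h2⟩
    · rintro ⟨pr, ⟨hunion, _⟩, h1, h2⟩ W hW
      have : W ∈ pr.1 ∪ pr.2 := hunion ▸ hW
      rcases this with hm | hm
      · rcases h1 W hm with ⟨a, ha, hp⟩; exact ⟨a, ha, Or.inl hp⟩
      · rcases h2 W hm with ⟨a, ha, hp⟩; exact ⟨a, ha, Or.inr hp⟩

end GFG
end

section
/- Let 𝔄 be a hyperassignment over X, 𝓕 a nonempty set of functors F : X → V, and Ψ ⊆ X × V. Then: (i) there exists W ∈ ext_𝓕(𝔄) with W ⊆ Ψ, if and only if there exist F ∈ 𝓕 and X₀ ∈ 𝔄 with ext(X₀,F) ⊆ Ψ; (ii) there exists W ∈ dual(ext_𝓕(dual(𝔄))) with W ⊆ Ψ, if and only if for every F ∈ 𝓕 there exists X₀ ∈ 𝔄 with ext(X₀,F) ⊆ Ψ. (Appendix proposition characterizing the one-step evolution of a hyperassignment under a quantifier, in the coherent and non-coherent cases respectively.) -/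
namespace GFG

variable {X V : Type*}

/-- One-step evolution of a hyperassignment under a quantifier (coherent and
non-coherent cases). -/
theorem one_step_evolution (𝔄 : Set (Set X)) (h : IsHyp 𝔄)
    (𝓕 : Set (X → V)) (h𝓕 : 𝓕.Nonempty) (Ψ : Set (X × V)) :
    ((∃ W ∈ extFam 𝓕 𝔄, W ⊆ Ψ) ↔ ∃ F ∈ 𝓕, ∃ X₀ ∈ 𝔄, extSet X₀ F ⊆ Ψ) ∧
    ((∃ W ∈ hdual (extFam 𝓕 (hdual 𝔄)), W ⊆ Ψ) ↔
      ∀ F ∈ 𝓕, ∃ X₀ ∈ 𝔄, extSet X₀ F ⊆ Ψ) := by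
  classical
  obtain ⟨W₁, hW₁⟩ := Set.nonempty_iff_ne_empty.mpr h.1
  have hW₁ne : W₁.Nonempty := by
    rcases Set.eq_empty_or_nonempty W₁ with rfl | hne
    · exact absurd hW₁ h.2
    · exact hne
  obtain ⟨x₁, hx₁⟩ := hW₁ne
  obtain ⟨F₁, hF₁⟩ := h𝓕
  constructor
  · constructor
    · rintro ⟨W, ⟨W₀, hW₀, F, hF, rfl⟩, hsub⟩
      exact ⟨F, hF, W₀, hW₀, hsub⟩
    · rintro ⟨F, hF, X₀, hX₀, hsub⟩
      exact ⟨extSet X₀ F, ⟨X₀, hX₀, F, hF, rfl⟩, hsub⟩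
  · constructor
    · rintro ⟨W, ⟨ϑ, hϑ, rfl⟩, hsub⟩ F hF
      by_contra hc
      push_neg at hc
      have hch : ∀ S ∈ 𝔄, ∃ a ∈ S, (a, F a) ∉ Ψ := by
        intro S hS
        obtain ⟨p, hp, hnp⟩ := Set.not_subset.mp (hc S hS)
        obtain ⟨a, ha, rfl⟩ := hp
        exact ⟨a, ha, hnp⟩
      set η : Set X → X := fun S =>
        if hS : ∃ a ∈ S, (a, F a) ∉ Ψ then hS.choose else x₁ with hηdef
      have hηmem : ∀ S ∈ 𝔄, η S ∈ S ∧ (η S, F (η S)) ∉ Ψ := by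
        intro S hS
        have hS' := hch S hS
        simp only [hηdef, dif_pos hS']
        exact ⟨hS'.choose_spec.1, hS'.choose_spec.2⟩
      have hY : η '' 𝔄 ∈ hdual 𝔄 := ⟨η, fun S hS => (hηmem S hS).1, rfl⟩
      have hZ : extSet (η '' 𝔄) F ∈ extFam 𝓕 (hdual 𝔄) :=
        ⟨η '' 𝔄, hY, F, hF, rfl⟩
      have h1 : ϑ (extSet (η '' 𝔄) F) ∈ extSet (η '' 𝔄) F := hϑ _ hZ
      have h2 : ϑ (extSet (η '' 𝔄) F) ∈ Ψ := hsub ⟨_, hZ, rfl⟩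
      obtain ⟨a, ⟨S, hS, rfl⟩, heq⟩ := h1
      rw [← heq] at h2
      exact (hηmem S hS).2 h2
    · intro hall
      have hne : ∀ Z ∈ extFam 𝓕 (hdual 𝔄), (Z ∩ Ψ).Nonempty := by
        rintro Z ⟨Y, ⟨η, hη, rfl⟩, F, hF, rfl⟩
        obtain ⟨X₀, hX₀, hsub⟩ := hall F hF
        refine ⟨(η X₀, F (η X₀)), ⟨η X₀, ⟨X₀, hX₀, rfl⟩, rfl⟩, ?_⟩
        exact hsub ⟨η X₀, hη X₀ hX₀, rfl⟩
      set ϑ : Set (X × V) → X × V := fun Z =>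
        if hZ : (Z ∩ Ψ).Nonempty then hZ.choose else (x₁, F₁ x₁) with hϑdef
      have hϑmem : ∀ Z ∈ extFam 𝓕 (hdual 𝔄), ϑ Z ∈ Z ∩ Ψ := by
        intro Z hZ
        have hZ' := hne Z hZ
        simp only [hϑdef, dif_pos hZ']
        exact hZ'.choose_spec
      refine ⟨ϑ '' extFam 𝓕 (hdual 𝔄), ⟨ϑ, fun Z hZ => (hϑmem Z hZ).1, rfl⟩, ?_⟩
      rintro p ⟨Z, hZ, rfl⟩
      exact (hϑmem Z hZ).2

end GFG
end

section
/- Let 𝔄₁, 𝔄₂ be hyperassignments over X with 𝔄₁ ≡ 𝔄₂, and let 𝓕 be a nonempty set of functors F : X → V. Then: (i) ext_𝓕(𝔄₁) ≡ ext_𝓕(𝔄₂); (ii) { ⋃_{F ∈ 𝓕} ext(ð(F), F) : ð a map assigning to each F ∈ 𝓕 a set ð(F) ∈ 𝔄₁ } ≡ dual(ext_𝓕(dual(𝔄₂))). (Appendix proposition: the 'normal' one-step evolution agrees, up to ≡, with the one-step evolution, on equivalent hyperassignments.) -/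
namespace GFG

variable {X V : Type*}

lemma extFam_mono (𝓕 : Set (X → V)) {𝔄₁ 𝔄₂ : Set (Set X)} (h : hle 𝔄₁ 𝔄₂) :
    hle (extFam 𝓕 𝔄₁) (extFam 𝓕 𝔄₂) := by
  rintro Y ⟨W, hW, F, hF, rfl⟩
  obtain ⟨W₂, hW₂, hsub⟩ := h W hW
  exact ⟨extSet W₂ F, ⟨W₂, hW₂, F, hF, rfl⟩, Set.image_mono hsub⟩

/-- The "normal evolution" set with source `𝔄₁` is `⊑` the dual of the extension of the dual. -/
lemma nrm_le_dual {𝔄₁ 𝔄₂ : Set (Set X)} (h₁ : IsHyp 𝔄₁) (h₂ : IsHyp 𝔄₂)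
    (h12 : hle 𝔄₁ 𝔄₂) (𝓕 : Set (X → V)) (h𝓕 : 𝓕.Nonempty) :
    hle { Y | ∃ sel : (X → V) → Set X, (∀ F ∈ 𝓕, sel F ∈ 𝔄₁) ∧
               Y = ⋃ F ∈ 𝓕, extSet (sel F) F }
        (hdual (extFam 𝓕 (hdual 𝔄₂))) := by
  classical
  -- a default point of X × V
  obtain ⟨W₀, hW₀⟩ := Set.nonempty_iff_ne_empty.2 h₁.1
  obtain ⟨x₀, _⟩ := Set.nonempty_iff_ne_empty.2 (fun hE => h₁.2 (hE ▸ hW₀))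
  obtain ⟨F₀, hF₀⟩ := h𝓕
  rintro Y ⟨sel, hsel, rfl⟩
  set Yu := ⋃ F ∈ 𝓕, extSet (sel F) F with hYu
  have key : ∀ S ∈ extFam 𝓕 (hdual 𝔄₂), ∃ p, p ∈ S ∧ p ∈ Yu := by
    rintro S ⟨W, ⟨ϑ, hϑ, rfl⟩, F, hF, rfl⟩
    obtain ⟨W₂, hW₂, hsub⟩ := h12 (sel F) (hsel F hF)
    refine ⟨(ϑ W₂, F (ϑ W₂)), ⟨ϑ W₂, ⟨W₂, hW₂, rfl⟩, rfl⟩, ?_⟩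
    exact Set.mem_biUnion hF ⟨ϑ W₂, hsub (hϑ W₂ hW₂), rfl⟩
  refine ⟨_, ⟨fun S => if hS : ∃ p, p ∈ S ∧ p ∈ Yu then hS.choose else (x₀, F₀ x₀),
    fun S hS => ?_, rfl⟩, ?_⟩
  · have hS' := key S hS
    simp only [dif_pos hS']
    exact hS'.choose_spec.1
  · rintro p ⟨S, hS, rfl⟩
    have hS' := key S hS
    simp only [dif_pos hS']
    exact hS'.choose_spec.2

/-- Converse direction. -/
lemma dual_le_nrm {𝔄₁ 𝔄₂ : Set (Set X)} (h₁ : IsHyp 𝔄₁) (h₂ : IsHyp 𝔄₂)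
    (h21 : hle 𝔄₂ 𝔄₁) (𝓕 : Set (X → V)) :
    hle (hdual (extFam 𝓕 (hdual 𝔄₂)))
        { Y | ∃ sel : (X → V) → Set X, (∀ F ∈ 𝓕, sel F ∈ 𝔄₁) ∧
               Y = ⋃ F ∈ 𝓕, extSet (sel F) F } := by
  classical
  obtain ⟨W₀, hW₀⟩ := Set.nonempty_iff_ne_empty.2 h₁.1
  obtain ⟨x₀, _⟩ := Set.nonempty_iff_ne_empty.2 (fun hE => h₁.2 (hE ▸ hW₀))
  rintro Z ⟨Θ, hΘ, rfl⟩
  set Z := Θ '' extFam 𝓕 (hdual 𝔄₂) with hZ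
  have key : ∀ F ∈ 𝓕, ∃ W ∈ 𝔄₁, extSet W F ⊆ Z := by
    intro F hF
    have key₂ : ∃ W ∈ 𝔄₂, extSet W F ⊆ Z := by
      by_contra hcon
      push_neg at hcon
      have hex : ∀ W ∈ 𝔄₂, ∃ a, a ∈ W ∧ (a, F a) ∉ Z := by
        intro W hW
        obtain ⟨p, hp, hpZ⟩ := Set.not_subset.1 (hcon W hW)
        obtain ⟨a, ha, rfl⟩ := hp
        exact ⟨a, ha, hpZ⟩
      set ϑ : Set X → X := fun W =>
        if hW : ∃ a, a ∈ W ∧ (a, F a) ∉ Z then hW.choose else x₀ with hϑ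
      have hϑc : IsChoice 𝔄₂ ϑ := by
        intro W hW
        have := hex W hW
        simp only [hϑ, dif_pos this]
        exact this.choose_spec.1
      have hϑn : ∀ W ∈ 𝔄₂, (ϑ W, F (ϑ W)) ∉ Z := by
        intro W hW
        have := hex W hW
        simp only [hϑ, dif_pos this]
        exact this.choose_spec.2
      have hS : extSet (ϑ '' 𝔄₂) F ∈ extFam 𝓕 (hdual 𝔄₂) :=
        ⟨ϑ '' 𝔄₂, ⟨ϑ, hϑc, rfl⟩, F, hF, rfl⟩
      have hmem : Θ (extSet (ϑ '' 𝔄₂) F) ∈ extSet (ϑ '' 𝔄₂) F := hΘ _ hS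
      have hmemZ : Θ (extSet (ϑ '' 𝔄₂) F) ∈ Z := ⟨_, hS, rfl⟩
      obtain ⟨a, ⟨W, hW, rfl⟩, heq⟩ := hmem
      rw [← heq] at hmemZ
      exact hϑn W hW hmemZ
    obtain ⟨W, hW, hsub⟩ := key₂
    obtain ⟨W₁, hW₁, hsub₁⟩ := h21 W hW
    exact ⟨W₁, hW₁, (Set.image_mono hsub₁).trans hsub⟩
  refine ⟨⋃ F ∈ 𝓕, extSet ((fun F => if hF : F ∈ 𝓕 then (key F hF).choose else W₀) F) F,
    ⟨_, fun F hF => ?_, rfl⟩, ?_⟩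
  · simp only [dif_pos hF]
    exact (key F hF).choose_spec.1
  · refine Set.iUnion₂_subset fun F hF => ?_
    simp only [dif_pos hF]
    exact (key F hF).choose_spec.2

/-- Normal one-step evolution agrees, up to `≡`, with the one-step evolution,
on equivalent hyperassignments. -/
theorem nrm_evl_bas (𝔄₁ 𝔄₂ : Set (Set X)) (h₁ : IsHyp 𝔄₁) (h₂ : IsHyp 𝔄₂)
    (h : heqv 𝔄₁ 𝔄₂) (𝓕 : Set (X → V)) (h𝓕 : 𝓕.Nonempty) :
    heqv (extFam 𝓕 𝔄₁) (extFam 𝓕 𝔄₂) ∧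
    heqv { Y | ∃ sel : (X → V) → Set X, (∀ F ∈ 𝓕, sel F ∈ 𝔄₁) ∧
               Y = ⋃ F ∈ 𝓕, extSet (sel F) F }
         (hdual (extFam 𝓕 (hdual 𝔄₂))) := by
  exact ⟨⟨extFam_mono 𝓕 h.1, extFam_mono 𝓕 h.2⟩,
    nrm_le_dual h₁ h₂ h.1 𝓕 h𝓕, dual_le_nrm h₁ h₂ h.2 𝓕⟩

end GFG
end

section
/- Let 𝔄 be a hyperassignment over X (a nonempty set of nonempty subsets of X) and P_S ⊆ P. Suppose: J : X × V → V satisfies, for all k ∈ ℕ, J(a₁,u)(k) = J(a₂,u)(k) whenever a₁ ≈_r^{>k} a₂ for some r ∈ P, J(a₁,u)(k) = J(a₂,u)(k) whenever a₁ ≈_r^{≥k} a₂ for some r ∈ P_S, and J(a,u₁)(k) = J(a,u₂)(k) whenever u₁(t) = u₂(t) for all t < k; G : X × V → V satisfies, for all k, G(a₁,v)(k) = G(a₂,v)(k) whenever a₁ ≈_r^{>k} a₂ for some r ∈ P, and G(a,v₁)(k) = G(a,v₂)(k) whenever v₁(t) = v₂(t) for all t ≤ k; and ð assigns to every functor H :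 X → V that is behavioral w.r.t. every r ∈ P a set ð(H) ∈ 𝔄. Then there exist a functor F : X → V that is behavioral w.r.t. every r ∈ P and strongly behavioral w.r.t. every r ∈ P_S, and a set X₀ ∈ 𝔄, such that { (a, G(a, F a), F a) : a ∈ X₀ } ⊆ ⋃_H { (b, H b, J(b, H b)) : b ∈ ð(H) }, where the union ranges over all functors H : X → V behavioral w.r.t. every r ∈ P. (This is the key claim establishing Proposition 7, the basic quantifier-swap inclusion evl^{∃∀}(𝔄, ∀^B p · ∃^{ς∪S(p)} q) ⊑ evl^{∃∀}(𝔄, ∃^ς q · ∀^B p) for a behavioral specification ς; triples (a,u,v) ∈ X × V × V encode assignments over P extended with value u for a fresh proposition p and value v for a fresh proposition q.) -/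
namespace GFG

/-- Temporal valuations. -/
abbrev Val : Type := ℕ → Bool

/-- Assignments over a type `P` of atomic propositions. -/
abbrev Asg (P : Type*) : Type _ := P → Val

variable {P : Type*}

/-- `a₁ ≈_p^{>k} a₂`: the assignments agree everywhere except possibly on `p`
strictly after time `k`. -/
def ApproxGT (p : P) (k : ℕ) (a₁ a₂ : Asg P) : Prop :=
  (∀ q, q ≠ p → a₁ q = a₂ q) ∧ ∀ t ≤ k, a₁ p t = a₂ p t

/-- `a₁ ≈_p^{≥k} a₂`: the assignments agree everywhere except possibly on `p`
from time `k` onward. -/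
def ApproxGE (p : P) (k : ℕ) (a₁ a₂ : Asg P) : Prop :=
  (∀ q, q ≠ p → a₁ q = a₂ q) ∧ ∀ t < k, a₁ p t = a₂ p t

/-- A functor behavioral w.r.t. `p`. -/
def Behavioral (p : P) (F : Asg P → Val) : Prop :=
  ∀ k a₁ a₂, ApproxGT p k a₁ a₂ → F a₁ k = F a₂ k

/-- A functor strongly behavioral w.r.t. `p`. -/
def StronglyBehavioral (p : P) (F : Asg P → Val) : Prop :=
  ∀ k a₁ a₂, ApproxGE p k a₁ a₂ → F a₁ k = F a₂ k

/-- The one-step relation `∼_ς^k` for a quantifier specification `ς = (B,S)`. -/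
def SimRel (B S : Set P) (k : ℕ) (a₁ a₂ : Asg P) : Prop :=
  a₁ = a₂ ∨ (∃ p ∈ B, ApproxGT p k a₁ a₂) ∨ (∃ p ∈ S, ApproxGE p k a₁ a₂)

/-- `≈_ς^k`: transitive closure of `∼_ς^k`. -/
def SpecApprox (B S : Set P) (k : ℕ) : Asg P → Asg P → Prop :=
  Relation.TransGen (SimRel B S k)

/-- A `ς`-functor for `ς = (B,S)`. -/
def IsSpecFunctor (B S : Set P) (F : Asg P → Val) : Prop :=
  (∀ p ∈ B, Behavioral p F) ∧ (∀ p ∈ S, StronglyBehavioral p F)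

/-- Auxiliary fixed-point construction for the quantifier swap. -/
def Fval (J G : Asg P × Val → Val) (a : Asg P) : ℕ → Bool
  | k => J (a, fun t => G (a, fun s => if h : s < k then Fval J G a s else false) t) k
decreasing_by exact h

/-- Key claim establishing the basic quantifier-swap inclusion
`evl^{∃∀}(𝔄, ∀^B p · ∃^{ς∪S(p)} q) ⊑ evl^{∃∀}(𝔄, ∃^ς q · ∀^B p)`. -/
theorem quantifier_swap_key
    (𝔄 : Set (Set (Asg P))) (h₁ : 𝔄 ≠ ∅) (h₂ : ∅ ∉ 𝔄)
    (PS : Set P)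
    (J : Asg P × Val → Val)
    (hJ₁ : ∀ (k : ℕ) (a₁ a₂ : Asg P) (u : Val),
      (∃ r : P, ApproxGT r k a₁ a₂) → J (a₁, u) k = J (a₂, u) k)
    (hJ₂ : ∀ (k : ℕ) (a₁ a₂ : Asg P) (u : Val),
      (∃ r ∈ PS, ApproxGE r k a₁ a₂) → J (a₁, u) k = J (a₂, u) k)
    (hJ₃ : ∀ (k : ℕ) (a : Asg P) (u₁ u₂ : Val),
      (∀ t < k, u₁ t = u₂ t) → J (a, u₁) k = J (a, u₂) k)
    (G : Asg P × Val → Val)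
    (hG₁ : ∀ (k : ℕ) (a₁ a₂ : Asg P) (v : Val),
      (∃ r : P, ApproxGT r k a₁ a₂) → G (a₁, v) k = G (a₂, v) k)
    (hG₂ : ∀ (k : ℕ) (a : Asg P) (v₁ v₂ : Val),
      (∀ t ≤ k, v₁ t = v₂ t) → G (a, v₁) k = G (a, v₂) k)
    (sel : (Asg P → Val) → Set (Asg P))
    (hsel : ∀ H : Asg P → Val, (∀ r : P, Behavioral r H) → sel H ∈ 𝔄) :
    ∃ F : Asg P → Val,
      (∀ r : P, Behavioral r F) ∧ (∀ r ∈ PS, StronglyBehavioral r F) ∧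
      ∃ X₀ ∈ 𝔄,
        { x : Asg P × Val × Val | ∃ a ∈ X₀, x = (a, G (a, F a), F a) } ⊆
        { y : Asg P × Val × Val | ∃ H : Asg P → Val, (∀ r : P, Behavioral r H) ∧
            ∃ b ∈ sel H, y = (b, H b, J (b, H b)) } := by
  set F : Asg P → Val := Fval J G with hF
  -- F a k = J (a, G (a, F a)) k
  have hFeq : ∀ (a : Asg P) (k : ℕ), F a k = J (a, G (a, F a)) k := by
    intro a k
    rw [hF, Fval]
    apply hJ₃
    intro t ht
    apply hG₂
    intro s hs
    simp [Nat.lt_of_le_of_lt hs ht]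
  -- F is behavioral
  have hFb : ∀ r : P, Behavioral r F := by
    intro r k
    induction k using Nat.strong_induction_on with
    | _ k ih =>
      intro a₁ a₂ hap
      rw [hFeq, hFeq]
      have step1 : J (a₁, G (a₁, F a₁)) k = J (a₂, G (a₁, F a₁)) k :=
        hJ₁ k a₁ a₂ _ ⟨r, hap⟩
      rw [step1]
      apply hJ₃
      intro t ht
      have hapt : ApproxGT r t a₁ a₂ :=
        ⟨hap.1, fun s hs => hap.2 s (le_trans hs (le_of_lt ht))⟩
      have g1 : G (a₁, F a₁) t = G (a₂, F a₁) t := hG₁ t a₁ a₂ _ ⟨r, hapt⟩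
      rw [g1]
      apply hG₂
      intro s hs
      exact ih s (lt_of_le_of_lt hs ht) a₁ a₂
        ⟨hap.1, fun u hu => hap.2 u (le_trans hu (le_of_lt (lt_of_le_of_lt hs ht)))⟩
  -- F is strongly behavioral on PS
  have hFsb : ∀ r ∈ PS, StronglyBehavioral r F := by
    intro r hr k a₁ a₂ hap
    rw [hFeq, hFeq]
    have step1 : J (a₁, G (a₁, F a₁)) k = J (a₂, G (a₁, F a₁)) k :=
      hJ₂ k a₁ a₂ _ ⟨r, hr, hap⟩
    rw [step1]
    apply hJ₃
    intro t ht
    have hapt : ApproxGT r t a₁ a₂ :=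
      ⟨hap.1, fun s hs => hap.2 s (lt_of_le_of_lt hs ht)⟩
    have g1 : G (a₁, F a₁) t = G (a₂, F a₁) t := hG₁ t a₁ a₂ _ ⟨r, hapt⟩
    rw [g1]
    apply hG₂
    intro s hs
    exact hFb r s a₁ a₂
      ⟨hap.1, fun u hu => hap.2 u (lt_of_le_of_lt (le_trans hu hs) ht)⟩
  refine ⟨F, hFb, hFsb, ?_⟩
  set H : Asg P → Val := fun a => G (a, F a) with hH
  have hHb : ∀ r : P, Behavioral r H := by
    intro r k a₁ a₂ hap
    have g1 : G (a₁, F a₁) k = G (a₂, F a₁) k := hG₁ k a₁ a₂ _ ⟨r, hap⟩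
    simp only [hH]
    rw [g1]
    apply hG₂
    intro s hs
    exact hFb r s a₁ a₂ ⟨hap.1, fun u hu => hap.2 u (le_trans hu hs)⟩
  refine ⟨sel H, hsel H hHb, ?_⟩
  rintro ⟨a, u, v⟩ ⟨b, hb, heq⟩
  refine ⟨H, hHb, b, hb, ?_⟩
  rw [heq]
  simp only [hH]
  refine congrArg _ (congrArg _ ?_)
  funext k
  exact hFeq b k

end GFG
end
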